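/- For X = (P^n)^s with n ≥ 1, s ≥ 2: if 0 < t ≤ sn and K_t(b₁,...,b_s) ≠ 0 with |b_i - b_j| ≤ 2n for all i,j, then t is a multiple of n, i.e. t ∈ {n, 2n, ..., sn}, and t = sn forces b_i ≤ -n-1 for all i. -/
import Mathlib


open Finset

/-- dim H^i(ℙ^n, O(d)) -/
def hP (n i : ℕ) (d : ℤ) : ℕ :=
  if i = 0 ∧ 0 ≤ d then ((n : ℤ) + d).toNat.choose n
  else if i = n ∧ 1 ≤ n ∧ d ≤ -(n : ℤ) - 1 then (-d - 1).toNat.choose n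
  else 0

/-- Künneth dimension of H^t(ℙ^{n 0} × ⋯ × ℙ^{n (s-1)}, O(b 0, …, b (s-1))) -/
def KD (s : ℕ) (n : Fin s → ℕ) (t : ℕ) (b : Fin s → ℤ) : ℕ :=
  ∑ f ∈ (Fintype.piFinset fun _ : Fin s => Finset.range (t + 1)).filter
      (fun f => ∑ i, f i = t), ∏ i, hP (n i) (f i) (b i)


lemma hP_ne {n : ℕ} (hn : 1 ≤ n) {i : ℕ} {d : ℤ} (h : hP n i d ≠ 0) :
    (i = 0 ∧ 0 ≤ d) ∨ (i = n ∧ d ≤ -(n : ℤ) - 1) := by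
  unfold hP at h
  split_ifs at h with h1 h2
  · exact Or.inl h1
  · exact Or.inr ⟨h2.1, h2.2.2⟩
  · exact absurd rfl h

/-- On (ℙ^n)^s, nonvanishing Künneth cohomology in balanced degrees forces t ∈ {n,2n,…,sn}. -/
theorem Pns_cohomology_degrees (n s : ℕ) (hn : 1 ≤ n) (t : ℕ) (b : Fin (s + 2) → ℤ)
    (ht0 : 0 < t) (ht : t ≤ (s + 2) * n) (hb : ∀ i j, |b i - b j| ≤ 2 * n)
    (hK : KD (s + 2) (fun _ => n) t b ≠ 0) :
    (∃ m : ℕ, t = m * n) ∧ (t = (s + 2) * n → ∀ i, b i ≤ -(n : ℤ) - 1) := by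
  unfold KD at hK
  obtain ⟨f, hf, hprod⟩ := Finset.exists_ne_zero_of_sum_ne_zero hK
  rw [Finset.mem_filter] at hf
  have key : ∀ i, f i = 0 ∨ (f i = n ∧ b i ≤ -(n : ℤ) - 1) := by
    intro i
    have := Finset.prod_ne_zero_iff.mp hprod i (Finset.mem_univ i)
    exact (hP_ne hn this).imp And.left id
  set S := Finset.univ.filter (fun i => f i = n) with hS
  have hsum : t = S.card * n := by
    rw [← hf.2, ← Finset.sum_filter_add_sum_filter_not Finset.univ (fun i => f i = n) f]
    have h1 : ∑ i ∈ S, f i = S.card * n := by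
      rw [Finset.sum_congr rfl (fun i hi => (Finset.mem_filter.mp hi).2),
        Finset.sum_const, smul_eq_mul]
    have h2 : ∑ i ∈ Finset.univ.filter (fun i => ¬ f i = n), f i = 0 := by
      apply Finset.sum_eq_zero
      intro i hi
      rcases key i with h | h
      · exact h
      · exact absurd h.1 (Finset.mem_filter.mp hi).2
    rw [h1, h2, add_zero]
  refine ⟨⟨S.card, hsum⟩, fun hteq i => ?_⟩
  have hcard : S.card = s + 2 := by
    have := hsum.symm.trans hteq
    have := Nat.eq_of_mul_eq_mul_right hn this
    simpa using this
  have hSu : S = Finset.univ := Finset.eq_univ_of_card S (by simpa using hcard)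
  have hfi : f i = n := by
    have : i ∈ S := hSu ▸ Finset.mem_univ i
    exact (Finset.mem_filter.mp this).2
  rcases key i with h | h
  · omega
  · exact h.2
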